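/- Let m be a closed and coherent integer DBM of dimension 2n, and define the DBM m' by m'[i,j] = min( m[i,j], ⌊m[i,ī]/2⌋ + ⌊m[j̄,j]/2⌋ ) for all i,j. Then m' is either tightly closed or it is not consistent. -/

import Mathlib

namespace Octagon

/-- An integer DBM of dimension `2*n` with entries in `ℤ ∪ {+∞}`. -/
abbrev DBM (n : ℕ) : Type := Fin (2 * n) → Fin (2 * n) → WithTop ℤ

/-- `bar i = i + 1` if `i` is even, `i - 1` if `i` is odd. -/
def bar {n : ℕ} (i : Fin (2 * n)) : Fin (2 * n) :=
  if h : (i : ℕ) % 2 = 0 then ⟨(i : ℕ) + 1, by have := i.isLt; omega⟩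
  else ⟨(i : ℕ) - 1, by have := i.isLt; omega⟩

/-- A DBM is closed iff its diagonal is zero and it satisfies the triangle inequality. -/
def Closed {n : ℕ} (m : DBM n) : Prop :=
  (∀ i, m i i = 0) ∧ ∀ i j k, m i j ≤ m i k + m k j

/-- A DBM is consistent iff its diagonal entries are nonnegative. -/
def Consistent {n : ℕ} (m : DBM n) : Prop :=
  ∀ i, 0 ≤ m i i

/-- A DBM is coherent iff `m[i,j] = m[bar j, bar i]` for all `i, j`. -/
def Coherent {n : ℕ} (m : DBM n) : Prop :=
  ∀ i j, m i j = m (bar j) (bar i)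

/-- Incremental closure of `m` with the new constraint `x'_a - x'_b ≤ d`. -/
def IncClose {n : ℕ} (m : DBM n) (a b : Fin (2 * n)) (d : ℤ) : DBM n :=
  fun i j =>
    min (m i j) <|
    min (m i a + (d : WithTop ℤ) + m b j) <|
    min (m i (bar b) + (d : WithTop ℤ) + m (bar a) j) <|
    min (m i (bar b) + (d : WithTop ℤ) + m (bar a) a + (d : WithTop ℤ) + m b j)
        (m i a + (d : WithTop ℤ) + m b (bar b) + (d : WithTop ℤ) + m (bar a) j)

/-- Floor halving `⌊x/2⌋` on `ℤ ∪ {+∞}`, mapping `+∞` to `+∞`. -/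
def fhalve : WithTop ℤ → WithTop ℤ := WithTop.map (fun x => Int.fdiv x 2)

/-- The entrywise tightening operation `x ↦ 2·⌊x/2⌋`, mapping `+∞` to `+∞`. -/
def tightEntry : WithTop ℤ → WithTop ℤ := WithTop.map (fun x => 2 * Int.fdiv x 2)

/-- Tightening of an integer DBM: key entries `m[i, bar i]` are replaced by
`2·⌊m[i, bar i]/2⌋`, all other entries are unchanged. -/
def Tighten {n : ℕ} (m : DBM n) : DBM n :=
  fun i j => if j = bar i then tightEntry (m i j) else m i j

/-- Integer strengthening of a DBM. -/
def Strengthen {n : ℕ} (m : DBM n) : DBM n :=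
  fun i j => min (m i j) (fhalve (m i (bar i)) + fhalve (m (bar j) j))

/-- An extended integer is even iff it is `+∞` or a finite even integer. -/
def EvenTop (x : WithTop ℤ) : Prop :=
  x = ⊤ ∨ ∃ k : ℤ, x = ((2 * k : ℤ) : WithTop ℤ)

/-!
Write `h i = ⌊m[i,ī]/2⌋`, so that `m'[i,j] = min (m[i,j]) (h i + h j̄)`. Closure and coherence
give `m[i,ī] ≤ m[i,k] + m[k,k̄] + m[k̄,ī] = 2·m[i,k] + m[k,k̄]`, hence `h i ≤ m[i,k] + h k`.
This inequality makes the triangle inequality for `m'` go through as soon as every new diagonal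
entry `h k + h k̄` is nonnegative; otherwise that entry witnesses inconsistency. The key entries of
`m'` are `h i + h i`, which makes strong closure and evenness immediate.
-/

lemma val_bar {n : ℕ} (i : Fin (2 * n)) :
    (bar i : ℕ) = if (i : ℕ) % 2 = 0 then (i : ℕ) + 1 else (i : ℕ) - 1 := by
  unfold bar
  split_ifs <;> rfl

@[simp]
lemma bar_bar {n : ℕ} (i : Fin (2 * n)) : bar (bar i) = i := by
  ext
  rw [val_bar, val_bar]
  split_ifs <;> omega

lemma fhalve_add_fhalve_le (x : WithTop ℤ) : fhalve x + fhalve x ≤ x := by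
  induction x using WithTop.recTopCoe with
  | top => exact le_top
  | coe x =>
    simp only [fhalve, WithTop.map_coe, ← WithTop.coe_add, WithTop.coe_le_coe]
    rw [Int.fdiv_eq_ediv_of_nonneg _ (by norm_num)]
    omega

lemma fhalve_le_add_fhalve {x c y : WithTop ℤ} (h : x ≤ c + c + y) :
    fhalve x ≤ c + fhalve y := by
  induction c using WithTop.recTopCoe with
  | top => simp
  | coe c =>
    induction y using WithTop.recTopCoe with
    | top => simp [fhalve]
    | coe y =>
      lift x to ℤ using ne_top_of_le_ne_top (by simp [← WithTop.coe_add]) h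
      simp only [fhalve, WithTop.map_coe, ← WithTop.coe_add, WithTop.coe_le_coe] at h ⊢
      rw [Int.fdiv_eq_ediv_of_nonneg _ (by norm_num), Int.fdiv_eq_ediv_of_nonneg _ (by norm_num)]
      omega

lemma evenTop_fhalve_add_self (x : WithTop ℤ) : EvenTop (fhalve x + fhalve x) := by
  induction x using WithTop.recTopCoe with
  | top => exact Or.inl rfl
  | coe x =>
    refine Or.inr ⟨x.fdiv 2, ?_⟩
    simp only [fhalve, WithTop.map_coe, ← WithTop.coe_add, WithTop.coe_inj]
    ring

section Strengthen

variable {n : ℕ} (m : DBM n)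

def halfKey (i : Fin (2 * n)) : WithTop ℤ := fhalve (m i (bar i))

lemma strengthen_apply (i j : Fin (2 * n)) :
    Strengthen m i j = min (m i j) (halfKey m i + halfKey m (bar j)) := by
  simp [Strengthen, halfKey]

lemma strengthen_le_self (i j : Fin (2 * n)) : Strengthen m i j ≤ m i j :=
  (strengthen_apply m i j).trans_le (min_le_left _ _)

lemma strengthen_le_halfKey_add (i j : Fin (2 * n)) :
    Strengthen m i j ≤ halfKey m i + halfKey m (bar j) :=
  (strengthen_apply m i j).trans_le (min_le_right _ _)

lemma strengthen_key (i : Fin (2 * n)) :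
    Strengthen m i (bar i) = halfKey m i + halfKey m i := by
  rw [strengthen_apply, bar_bar]
  exact min_eq_right (fhalve_add_fhalve_le _)

lemma evenTop_strengthen_key (i : Fin (2 * n)) : EvenTop (Strengthen m i (bar i)) := by
  rw [strengthen_key]
  exact evenTop_fhalve_add_self _

lemma strengthen_add_self_le (i j : Fin (2 * n)) :
    Strengthen m i j + Strengthen m i j ≤ Strengthen m i (bar i) + Strengthen m (bar j) j := by
  have hj : Strengthen m (bar j) j = halfKey m (bar j) + halfKey m (bar j) := by
    simpa using strengthen_key m (bar j)
  rw [strengthen_key, hj]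
  calc Strengthen m i j + Strengthen m i j
      ≤ (halfKey m i + halfKey m (bar j)) + (halfKey m i + halfKey m (bar j)) :=
        add_le_add (strengthen_le_halfKey_add m i j) (strengthen_le_halfKey_add m i j)
    _ = (halfKey m i + halfKey m i) + (halfKey m (bar j) + halfKey m (bar j)) := by abel

lemma not_consistent_strengthen {i : Fin (2 * n)} (hi : halfKey m i + halfKey m (bar i) < 0) :
    ¬ Consistent (Strengthen m) := fun hc =>
  (hi.trans_le' (strengthen_le_halfKey_add m i i)).not_ge (hc i)

variable {m} (hcl : Closed m) (hcoh : Coherent m)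
include hcl hcoh

lemma Closed.key_le_two_mul_add_key (i k : Fin (2 * n)) :
    m i (bar i) ≤ m i k + m i k + m k (bar k) :=
  calc m i (bar i) ≤ m i k + m k (bar i) := hcl.2 i (bar i) k
    _ ≤ m i k + (m k (bar k) + m (bar k) (bar i)) := add_le_add_right (hcl.2 k (bar i) (bar k)) _
    _ = m i k + m i k + m k (bar k) := by rw [← hcoh i k]; abel

lemma Closed.halfKey_le_add_halfKey (i k : Fin (2 * n)) : halfKey m i ≤ m i k + halfKey m k :=
  fhalve_le_add_fhalve (hcl.key_le_two_mul_add_key hcoh i k)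

lemma Closed.halfKey_bar_le_add_halfKey_bar (k j : Fin (2 * n)) :
    halfKey m (bar j) ≤ m k j + halfKey m (bar k) := by
  simpa [← hcoh k j] using hcl.halfKey_le_add_halfKey hcoh (bar j) (bar k)

variable (hpos : ∀ i, 0 ≤ halfKey m i + halfKey m (bar i))
include hpos

lemma Closed.strengthen_triangle (i j k : Fin (2 * n)) :
    Strengthen m i j ≤ Strengthen m i k + Strengthen m k j := by
  rw [strengthen_apply m i k, strengthen_apply m k j, min_add, add_min, add_min]
  have hub := strengthen_le_halfKey_add m i j
  refine le_min (le_min ?_ ?_) (le_min ?_ ?_)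
  · exact (strengthen_le_self m i j).trans (hcl.2 i j k)
  · calc Strengthen m i j ≤ halfKey m i + halfKey m (bar j) := hub
      _ ≤ m i k + halfKey m k + halfKey m (bar j) :=
        add_le_add_left (hcl.halfKey_le_add_halfKey hcoh i k) _
      _ = m i k + (halfKey m k + halfKey m (bar j)) := add_assoc _ _ _
  · calc Strengthen m i j ≤ halfKey m i + halfKey m (bar j) := hub
      _ ≤ halfKey m i + (m k j + halfKey m (bar k)) :=
        add_le_add_right (hcl.halfKey_bar_le_add_halfKey_bar hcoh k j) _
      _ = halfKey m i + halfKey m (bar k) + m k j := by abel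
  · calc Strengthen m i j ≤ halfKey m i + halfKey m (bar j) := hub
      _ ≤ halfKey m i + halfKey m (bar j) + (halfKey m k + halfKey m (bar k)) :=
        le_add_of_nonneg_right (hpos k)
      _ = halfKey m i + halfKey m (bar k) + (halfKey m k + halfKey m (bar j)) := by abel

lemma Closed.closed_strengthen : Closed (Strengthen m) := by
  refine ⟨fun i => ?_, hcl.strengthen_triangle hcoh hpos⟩
  rw [strengthen_apply, hcl.1 i]
  exact min_eq_left (hpos i)

end Strengthen

/-- Theorem: tightening-and-strengthening a closed coherent integer DBM in one
step yields a DBM that is tightly closed or inconsistent. -/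
theorem tighten_strengthen_tightlyClosed_or_not_consistent {n : ℕ} (m : DBM n)
    (hcl : Closed m) (hcoh : Coherent m) (m' : DBM n)
    (hm' : ∀ i j, m' i j = min (m i j) (fhalve (m i (bar i)) + fhalve (m (bar j) j))) :
    (Closed m' ∧
     (∀ i j, m' i j + m' i j ≤ m' i (bar i) + m' (bar j) j) ∧
     (∀ i, EvenTop (m' i (bar i)))) ∨ ¬ Consistent m' := by
  obtain rfl : m' = Strengthen m := funext fun i => funext (hm' i)
  by_cases hpos : ∀ i, 0 ≤ halfKey m i + halfKey m (bar i)
  · exact Or.inl ⟨hcl.closed_strengthen hcoh hpos, strengthen_add_self_le m,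
      evenTop_strengthen_key m⟩
  · obtain ⟨i, hi⟩ := not_forall.mp hpos
    exact Or.inr (not_consistent_strengthen m (not_le.mp hi))

end Octagon
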